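/- arXiv:1811.11225 — 6 statements merged into one kernel-verified Lean document; each statement's English description precedes it below -/
import Mathlib

section
/- Let a, b, c, d be rational functions in C(x) with a ≠ b, and let τ be the shift operator (τf)(x)=f(x−h) for a fixed nonzero h. If c(x) = b(x−h)·(a−b)(x)/(a−b)(x−h) and d(x) = a(x−h)·(a−b)(x)/(a−b)(x−h), then as rational difference operators (1 − a·τ)(1 − b·τ)^{-1} = (1 − c·τ)^{-1}(1 − d·τ). -/
open Polynomial RatFunc

noncomputable def shiftHom (h : ℂ) : RatFunc ℂ →ₐ[ℂ] RatFunc ℂ :=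
  RatFunc.liftAlgHom (Polynomial.aeval (RatFunc.X - RatFunc.C h)) <|
    nonZeroDivisors_le_comap_nonZeroDivisors_of_injective _ <| by
      have key : ∀ p : ℂ[X], (Polynomial.aeval (RatFunc.X - RatFunc.C h)) p
          = algebraMap ℂ[X] (RatFunc ℂ) (p.comp (Polynomial.X - Polynomial.C h)) := by
        intro p
        have := Polynomial.aeval_algHom_apply (IsScalarTower.toAlgHom ℂ ℂ[X] (RatFunc ℂ))
          (Polynomial.X - Polynomial.C h) p
        simpa [Polynomial.comp_eq_aeval, map_sub] using this
      intro p q hpq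
      have h2 : p.comp (Polynomial.X - Polynomial.C h) = q.comp (Polynomial.X - Polynomial.C h) :=
        RatFunc.algebraMap_injective ℂ (by rw [← key, ← key, hpq])
      have h3 := congrArg (fun r : ℂ[X] => r.comp (Polynomial.X + Polynomial.C h)) h2
      simpa [Polynomial.comp_assoc, Polynomial.sub_comp, Polynomial.X_comp,
        Polynomial.C_comp] using h3

/-- multiplication operator -/
noncomputable def mulOp (f : RatFunc ℂ) : Module.End ℂ (RatFunc ℂ) := LinearMap.mulLeft ℂ f

/-- shift operator τ -/
noncomputable def tauOp (h : ℂ) : Module.End ℂ (RatFunc ℂ) := (shiftHom h).toLinearMap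

/-- If c = b[1]·(a−b)/(a−b)[1] and d = a[1]·(a−b)/(a−b)[1], then
(1 − a·τ)(1 − b·τ)⁻¹ = (1 − c·τ)⁻¹(1 − d·τ) as rational difference operators,
equivalently (cross-multiplying by the invertible factors 1 − c·τ on the left and
1 − b·τ on the right) the identity of difference operators below. -/
theorem rational_difference_operator_swap (h : ℂ) (hh : h ≠ 0)
    (a b c d : RatFunc ℂ) (hab : a ≠ b)
    (hc : c = shiftHom h b * (a - b) / shiftHom h (a - b))
    (hd : d = shiftHom h a * (a - b) / shiftHom h (a - b)) :
    (1 - mulOp c * tauOp h) * (1 - mulOp a * tauOp h)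
      = (1 - mulOp d * tauOp h) * (1 - mulOp b * tauOp h) := by
  have hne : shiftHom h (a - b) ≠ 0 := fun H =>
    hab (sub_eq_zero.mp ((map_eq_zero_iff _ (shiftHom h).injective).mp H))
  have hsum : a + c = b + d := by
    have hcd : c - d = b - a := by
      rw [hc, hd, div_sub_div_same, ← sub_mul, ← map_sub]
      have e : b - a = -(a - b) := by ring
      rw [e, map_neg, neg_mul, neg_div, mul_div_cancel_left₀ _ hne]
    linear_combination hcd
  have hca : c * shiftHom h a = d * shiftHom h b := by
    rw [hc, hd]
    field_simp
  ext g
  simp only [mulOp, tauOp, Module.End.mul_apply, Module.End.one_apply,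
    LinearMap.sub_apply, LinearMap.mulLeft_apply, AlgHom.toLinearMap_apply, map_sub, map_mul]
  linear_combination -(shiftHom h g) * hsum + (shiftHom h (shiftHom h g)) * hca
end

section
/- Let y(x) = ∏_{j=1}^l (x − t_j) with t₁,…,t_l distinct. Then the points t_j satisfy the gl(1|1) Bethe ansatz equations ∏_{k: a_k+b_k≠0} (t_j − z_k + a_k h)/(t_j − z_k − b_k h) = 1 for all j = 1,…,l, if and only if y divides the polynomial φ − ψ, where φ(x) = ∏_{k: a_k+b_k≠0}(x − z_k + a_k h) and ψ(x) = ∏_{k: a_k+b_k≠0}(x − z_k − b_k h); equivalently, there exists a polynomial ỹ with y(x)·ỹ(x+h) = φ(x) − ψ(x). -/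
open Polynomial

/-- the points t₁,…,t_l (distinct) satisfy the gl(1|1) Bethe ansatz
equations iff y = ∏(x − t_j) divides φ − ψ, equivalently iff there exists a
polynomial ỹ with y(x)·ỹ(x+h) = φ(x) − ψ(x). -/
theorem gl11_bae_iff_divides (h : ℂ) (hh : h ≠ 0) (p l : ℕ)
    (z : Fin p → ℂ) (hz : ∀ i j : Fin p, i ≠ j → ∀ n : ℤ, z i - z j ≠ n * h)
    (a b : Fin p → ℕ) (hab : ∀ k, a k = 0 → b k = 0)
    (htyp : ∃ k, a k + b k ≠ 0)
    (t : Fin l → ℂ) (ht : Function.Injective t)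
    (hden : ∀ (j : Fin l) (k : Fin p), a k + b k ≠ 0 → t j ≠ z k + (b k : ℂ) * h)
    (y φ ψ : Polynomial ℂ)
    (hy : y = ∏ j, (Polynomial.X - Polynomial.C (t j)))
    (hphi : φ = ∏ k ∈ Finset.univ.filter (fun k => a k + b k ≠ 0),
      (Polynomial.X - Polynomial.C (z k) + Polynomial.C ((a k : ℂ) * h)))
    (hpsi : ψ = ∏ k ∈ Finset.univ.filter (fun k => a k + b k ≠ 0),
      (Polynomial.X - Polynomial.C (z k) - Polynomial.C ((b k : ℂ) * h))) :
    ((∀ j : Fin l, ∏ k ∈ Finset.univ.filter (fun k => a k + b k ≠ 0),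
        ((t j - z k + (a k : ℂ) * h) / (t j - z k - (b k : ℂ) * h)) = 1)
      ↔ y ∣ (φ - ψ))
    ∧ ((∀ j : Fin l, ∏ k ∈ Finset.univ.filter (fun k => a k + b k ≠ 0),
        ((t j - z k + (a k : ℂ) * h) / (t j - z k - (b k : ℂ) * h)) = 1)
      ↔ ∃ yt : Polynomial ℂ,
          y * yt.comp (Polynomial.X + Polynomial.C h) = φ - ψ) := by
  -- Key: BAE at j ↔ eval (t j) (φ - ψ) = 0
  have hpsi_eval : ∀ j : Fin l, ψ.eval (t j) =
      ∏ k ∈ Finset.univ.filter (fun k => a k + b k ≠ 0), (t j - z k - (b k : ℂ) * h) := by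
    intro j; simp [hpsi, eval_prod]
  have hphi_eval : ∀ j : Fin l, φ.eval (t j) =
      ∏ k ∈ Finset.univ.filter (fun k => a k + b k ≠ 0), (t j - z k + (a k : ℂ) * h) := by
    intro j; simp [hphi, eval_prod]
  have hpsi_ne : ∀ j : Fin l, ψ.eval (t j) ≠ 0 := by
    intro j
    rw [hpsi_eval]
    apply Finset.prod_ne_zero_iff.mpr
    intro k hk
    rw [Finset.mem_filter] at hk
    have := hden j k hk.2
    intro hc
    apply this
    linear_combination hc
  have key : ∀ j : Fin l,
      (∏ k ∈ Finset.univ.filter (fun k => a k + b k ≠ 0),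
        ((t j - z k + (a k : ℂ) * h) / (t j - z k - (b k : ℂ) * h)) = 1)
      ↔ (φ - ψ).eval (t j) = 0 := by
    intro j
    rw [Finset.prod_div_distrib, ← hphi_eval, ← hpsi_eval,
      div_eq_one_iff_eq (hpsi_ne j)]
    simp [sub_eq_zero]
  have hdvd : (∀ j : Fin l, (φ - ψ).eval (t j) = 0) ↔ y ∣ (φ - ψ) := by
    constructor
    · intro hall
      rw [hy]
      apply Finset.prod_dvd_of_coprime
      · intro i _ j _ hij
        exact (Polynomial.pairwise_coprime_X_sub_C ht) hij
      · intro i _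
        exact dvd_of_eq (by ring) |>.trans
          ((Polynomial.dvd_iff_isRoot).mpr (hall i))
    · intro hd j
      have : (Polynomial.X - Polynomial.C (t j)) ∣ (φ - ψ) := by
        refine dvd_trans ?_ hd
        rw [hy]
        exact Finset.dvd_prod_of_mem _ (Finset.mem_univ j)
      exact (Polynomial.dvd_iff_isRoot).mp this
  have hiff1 : (∀ j : Fin l, ∏ k ∈ Finset.univ.filter (fun k => a k + b k ≠ 0),
        ((t j - z k + (a k : ℂ) * h) / (t j - z k - (b k : ℂ) * h)) = 1)
      ↔ y ∣ (φ - ψ) := by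
    rw [← hdvd]
    exact forall_congr' key
  refine ⟨hiff1, hiff1.trans ?_⟩
  constructor
  · rintro ⟨q, hq⟩
    refine ⟨q.comp (Polynomial.X - Polynomial.C h), ?_⟩
    rw [Polynomial.comp_assoc]
    simp [hq.symm]
  · rintro ⟨yt, hyt⟩
    exact ⟨yt.comp (Polynomial.X + Polynomial.C h), hyt.symm⟩
end

section
/- If ỹ is a polynomial with y(x)ỹ(x+h) = φ(x) − ψ(x) where y represents a solution of the gl(1|1) Bethe ansatz equation with data φ, ψ as above, then ỹ represents a solution of the gl(1|1) Bethe ansatz equation for the opposite parity, i.e. every root t̃ of ỹ satisfies ∏_{k: a_k+b_k≠0} (t̃ − z_k − (b_k+1)h)/(t̃ − z_k + (a_k−1)h) = 1, equivalently φ(t̃+h) = ψ(t̃+h). Moreover deg ỹ = r − 1 − deg y, where r = #{k : a_k + b_k ≠ 0}. -/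
open Polynomial

lemma coeff_prod_card_sub_one {ι : Type*} (S : Finset ι) (c : ι → ℂ) (hS : 1 ≤ S.card) :
    (∏ k ∈ S, (X + C (c k))).coeff (S.card - 1) = ∑ k ∈ S, c k := by
  rw [Finset.prod_X_add_C_coeff _ _ (Nat.sub_le _ _)]
  have : S.card - (S.card - 1) = 1 := by omega
  rw [this]
  simp [Finset.powersetCard_one, Finset.sum_map]

/-- fermionic reproduction for gl(1|1).  If y = ∏(x − t_j) represents a
solution of the gl(1|1) Bethe ansatz equation and y(x)·ỹ(x+h) = φ(x) − ψ(x), then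
every root t̃ of ỹ satisfies the opposite-parity Bethe ansatz equation
∏(t̃ − z_k − (b_k+1)h)/(t̃ − z_k + (a_k−1)h) = 1, equivalently φ(t̃−h) = ψ(t̃−h);
moreover deg y + deg ỹ + 1 = r, where r = #{k : a_k + b_k ≠ 0}. -/
theorem gl11_fermionic_reproduction (h : ℂ) (hh : h ≠ 0) (p l : ℕ)
    (z : Fin p → ℂ) (hz : ∀ i j : Fin p, i ≠ j → ∀ n : ℤ, z i - z j ≠ n * h)
    (a b : Fin p → ℕ) (hab : ∀ k, a k = 0 → b k = 0)
    (htyp : ∃ k, a k + b k ≠ 0)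
    (t : Fin l → ℂ) (ht : Function.Injective t)
    (hden : ∀ (j : Fin l) (k : Fin p), a k + b k ≠ 0 → t j ≠ z k + (b k : ℂ) * h)
    (y yt φ ψ : Polynomial ℂ)
    (hy : y = ∏ j, (Polynomial.X - Polynomial.C (t j)))
    (hphi : φ = ∏ k ∈ Finset.univ.filter (fun k => a k + b k ≠ 0),
      (Polynomial.X - Polynomial.C (z k) + Polynomial.C ((a k : ℂ) * h)))
    (hpsi : ψ = ∏ k ∈ Finset.univ.filter (fun k => a k + b k ≠ 0),
      (Polynomial.X - Polynomial.C (z k) - Polynomial.C ((b k : ℂ) * h)))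
    (hbae : ∀ j : Fin l, ∏ k ∈ Finset.univ.filter (fun k => a k + b k ≠ 0),
        ((t j - z k + (a k : ℂ) * h) / (t j - z k - (b k : ℂ) * h)) = 1)
    (hrel : y * yt.comp (Polynomial.X + Polynomial.C h) = φ - ψ) :
    (∀ tt : ℂ, yt.IsRoot tt →
        φ.eval (tt - h) = ψ.eval (tt - h) ∧
        ∏ k ∈ Finset.univ.filter (fun k => a k + b k ≠ 0),
          ((tt - z k - ((b k : ℂ) + 1) * h) / (tt - z k + ((a k : ℂ) - 1) * h)) = 1)
    ∧ y.natDegree + yt.natDegree + 1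
        = (Finset.univ.filter fun k => a k + b k ≠ 0).card := by
  set S := Finset.univ.filter (fun k => a k + b k ≠ 0) with hS
  have hphi' : φ = ∏ k ∈ S, (X + C ((a k : ℂ) * h - z k)) := by
    rw [hphi]; refine Finset.prod_congr rfl fun k _ => ?_
    rw [map_sub]; ring
  have hpsi' : ψ = ∏ k ∈ S, (X + C (-z k - (b k : ℂ) * h)) := by
    rw [hpsi]; refine Finset.prod_congr rfl fun k _ => ?_
    rw [map_sub, map_neg]; ring
  have hSne : S.Nonempty := by
    obtain ⟨k, hk⟩ := htyp
    exact ⟨k, Finset.mem_filter.mpr ⟨Finset.mem_univ _, hk⟩⟩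
  have hScard : 1 ≤ S.card := Finset.card_pos.mpr hSne
  -- the key coefficient
  have hcoeff : (φ - ψ).coeff (S.card - 1) = (∑ k ∈ S, ((a k : ℂ) + (b k : ℂ))) * h := by
    rw [coeff_sub, hphi', hpsi', coeff_prod_card_sub_one _ _ hScard,
      coeff_prod_card_sub_one _ _ hScard, ← Finset.sum_sub_distrib, Finset.sum_mul]
    refine Finset.sum_congr rfl fun k _ => ?_; ring
  have hsumne : (∑ k ∈ S, ((a k : ℂ) + (b k : ℂ))) ≠ 0 := by
    have hcast : (∑ k ∈ S, ((a k : ℂ) + (b k : ℂ))) = ((∑ k ∈ S, (a k + b k) : ℕ) : ℂ) := by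
      push_cast; rfl
    rw [hcast]
    have hpos : 0 < ∑ k ∈ S, (a k + b k) := by
      obtain ⟨k, hk⟩ := hSne
      have hk' : a k + b k ≠ 0 := by simpa [hS] using hk
      calc 0 < a k + b k := Nat.pos_of_ne_zero hk'
        _ ≤ ∑ k ∈ S, (a k + b k) :=
          Finset.single_le_sum (f := fun k => a k + b k) (fun _ _ => Nat.zero_le _) hk
    exact_mod_cast hpos.ne'
  have hcne : (φ - ψ).coeff (S.card - 1) ≠ 0 := by
    rw [hcoeff]; exact mul_ne_zero hsumne hh
  -- monicity and degrees of φ, ψ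
  have hφm : φ.Monic := by
    rw [hphi']; exact monic_prod_of_monic _ _ fun k _ => monic_X_add_C _
  have hψm : ψ.Monic := by
    rw [hpsi']; exact monic_prod_of_monic _ _ fun k _ => monic_X_add_C _
  have hφd : φ.natDegree = S.card := by
    rw [hphi', natDegree_prod_of_monic _ _ fun k _ => monic_X_add_C _]
    simp only [natDegree_X_add_C]
    simp
  have hψd : ψ.natDegree = S.card := by
    rw [hpsi', natDegree_prod_of_monic _ _ fun k _ => monic_X_add_C _]
    simp only [natDegree_X_add_C]
    simp
  have hsubne : φ - ψ ≠ 0 := fun h0 => hcne (by rw [h0, coeff_zero])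
  have hdeglt : (φ - ψ).degree < φ.degree := by
    refine degree_sub_lt ?_ hφm.ne_zero ?_
    · rw [degree_eq_natDegree hφm.ne_zero, degree_eq_natDegree hψm.ne_zero, hφd, hψd]
    · rw [hφm.leadingCoeff, hψm.leadingCoeff]
  have hdsub : (φ - ψ).natDegree = S.card - 1 := by
    have h1 : S.card - 1 ≤ (φ - ψ).natDegree := le_natDegree_of_ne_zero hcne
    have h2 : (φ - ψ).natDegree < φ.natDegree :=
      natDegree_lt_natDegree hsubne hdeglt
    omega
  -- degree count
  have hym : y.Monic := by
    rw [hy]; exact monic_prod_of_monic _ _ fun j _ => monic_X_sub_C _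
  have hcompne : yt.comp (X + C h) ≠ 0 := by
    intro h0
    rw [h0, mul_zero] at hrel
    exact hsubne hrel.symm
  have hdeg : y.natDegree + yt.natDegree = S.card - 1 := by
    have hmul := natDegree_mul hym.ne_zero hcompne
    rw [hrel, hdsub, natDegree_comp, natDegree_X_add_C, mul_one] at hmul
    omega
  refine ⟨?_, by omega⟩
  intro tt htt
  -- evaluate at tt - h
  have heq : φ.eval (tt - h) = ψ.eval (tt - h) := by
    have h2 := congrArg (Polynomial.eval (tt - h)) hrel
    have h3 : tt - h + h = tt := by ring
    have h4 : Polynomial.eval tt yt = 0 := htt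
    simp only [eval_mul, eval_sub, eval_comp, eval_add, eval_X, eval_C, h3, h4,
      mul_zero] at h2
    exact sub_eq_zero.mp h2.symm
  refine ⟨heq, ?_⟩
  -- product form
  have hφe : φ.eval (tt - h) = ∏ k ∈ S, (tt - z k + ((a k : ℂ) - 1) * h) := by
    rw [hphi', eval_prod]
    refine Finset.prod_congr rfl fun k _ => ?_
    simp only [eval_add, eval_X, eval_C]; ring
  have hψe : ψ.eval (tt - h) = ∏ k ∈ S, (tt - z k - ((b k : ℂ) + 1) * h) := by
    rw [hpsi', eval_prod]
    refine Finset.prod_congr rfl fun k _ => ?_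
    simp only [eval_add, eval_X, eval_C]; ring
  have hφne : φ.eval (tt - h) ≠ 0 := by
    intro h0
    have hψ0 : ψ.eval (tt - h) = 0 := heq ▸ h0
    rw [hφe, Finset.prod_eq_zero_iff] at h0
    rw [hψe, Finset.prod_eq_zero_iff] at hψ0
    obtain ⟨k₀, hk₀S, hk₀⟩ := h0
    obtain ⟨k₁, hk₁S, hk₁⟩ := hψ0
    have hk₀' : a k₀ + b k₀ ≠ 0 := by simpa [hS] using hk₀S
    have hk₁' : a k₁ + b k₁ ≠ 0 := by simpa [hS] using hk₁S
    by_cases hkk : k₀ = k₁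
    · subst hkk
      have hmul : ((a k₀ : ℂ) + (b k₀ : ℂ)) * h = 0 := by linear_combination hk₀ - hk₁
      rcases mul_eq_zero.mp hmul with h1 | h1
      · have h2 : ((a k₀ + b k₀ : ℕ) : ℂ) = 0 := by push_cast; linear_combination h1
        exact hk₀' (Nat.cast_eq_zero.mp h2)
      · exact hh h1
    · refine hz k₀ k₁ hkk ((a k₀ : ℤ) + (b k₁ : ℤ)) ?_
      push_cast
      linear_combination hk₁ - hk₀
  rw [Finset.prod_div_distrib, ← hφe, ← hψe, ← heq, div_self hφne]
end

section
/- Let V be an r-dimensional space of polynomials with discrete exponents at z given by c_r < c_{r−1}+1 < … < c_1 + r − 1 (so the i-th smallest exponent is c_{r+1−i} + i − 1), and set 𝒯_i(x) = (x−z+h)(x−z+2h)⋯(x−z+c_i h). Then for any f₁,…,f_i ∈ V, the discrete Wronskian Wr(f₁,…,f_i)(x) = det(f_j(x−(k−1)h))_{k,j=1}^i is divisible in C[x] by ∏_{j=1}^i 𝒯_{r+1−j}(x−(i−j)h). -/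
/-!
Both sides are products of the linear polynomials `X - (z - t h)`, `t ∈ ℤ`, which are pairwise
coprime since `h ≠ 0`, so it suffices to compare the multiplicity of each of them.
The discrete Wronskian is alternating and multilinear in `f`, so we may take `f = v ∘ κ` with `κ`
injective. In the Leibniz expansion of that Casorati determinant, the term of `σ` is
`∏ j, v (κ j) (x - σ(j) h)`, which vanishes at `z - t h` to order at least the number of `j`
with `1 ≤ t + σ j ≤ e (κ j)`, where `e k = c (rev k) + k` are the exponents. Because they
increase, this number is at least the multiplicity of `z - t h` in `∏ j, 𝒯_{r+1-j}(x - (i-j) h)`.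
-/

open Polynomial

/-- The discrete Wronskian (Casorati determinant)
Wr(f₁,…,f_i)(x) = det(f_j(x−(k−1)h)). -/
noncomputable def discWr (h : ℂ) {r : ℕ} (g : Fin r → Polynomial ℂ) : Polynomial ℂ :=
  Matrix.det (Matrix.of fun i j : Fin r =>
    (g j).comp (Polynomial.X - Polynomial.C (((i : ℕ) : ℂ) * h)))

open Finset Function

theorem Finset.prod_prod_dvd_of_coprime {R ι α : Type*} [CommSemiring R] [DecidableEq α]
    {F : α → R} (hF : Pairwise (IsCoprime on F)) (s : Finset ι) (I : ι → Finset α) {p : R}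
    (hp : ∀ a, F a ^ #{j ∈ s | a ∈ I j} ∣ p) : ∏ j ∈ s, ∏ a ∈ I j, F a ∣ p := by
  rw [prod_comm' (t' := s.biUnion I) (s' := fun a => {j ∈ s | a ∈ I j})
    (fun j a => by simp only [mem_filter, mem_biUnion]; grind)]
  simp_rw [prod_const]
  exact prod_dvd_of_coprime (fun a _ b _ hab => (hF hab).pow) fun a _ => hp a

theorem AlternatingMap.map_mem_of_forall_injective {R M N ι κ : Type*} [CommSemiring R]
    [AddCommMonoid M] [Module R M] [AddCommMonoid N] [Module R N] [Fintype ι] [Fintype κ]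
    (F : M [⋀^ι]→ₗ[R] N) (p : Submodule R N) {v : κ → M}
    (hv : ∀ σ : ι → κ, Injective σ → F (v ∘ σ) ∈ p) {f : ι → M}
    (hf : ∀ j, f j ∈ Submodule.span R (Set.range v)) : F f ∈ p := by
  classical
  choose a ha using fun j => (Submodule.mem_span_range_iff_exists_fun R).1 (hf j)
  obtain rfl : f = fun j => ∑ k, a j k • v k := funext fun j => (ha j).symm
  rw [← F.coe_multilinearMap, MultilinearMap.map_sum]
  refine p.sum_mem fun σ _ => ?_
  rw [MultilinearMap.map_smul_univ, F.coe_multilinearMap]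
  by_cases hσ : Injective σ
  · exact p.smul_mem _ (hv σ hσ)
  · rw [show (fun j => v (σ j)) = v ∘ σ from rfl,
      F.map_eq_zero_of_not_injective _ fun h => hσ h.of_comp, smul_zero]
    exact p.zero_mem

theorem Polynomial.X_sub_C_dvd_comp_X_sub_C_iff {R : Type*} [CommRing R] {p : R[X]} {a b : R} :
    X - C a ∣ p.comp (X - C b) ↔ p.eval (a - b) = 0 := by
  rw [dvd_iff_isRoot, IsRoot, eval_comp, eval_sub, eval_X, eval_C]

theorem Fin.card_filter_castLE_le_card_filter {α : Type*} [LinearOrder α] {r i : ℕ} (hi : i ≤ r)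
    {e : Fin r → α} (he : Monotone e) {κ : Fin i → Fin r} (hκ : Injective κ) (u : α) :
    #{j : Fin i | u ≤ e (Fin.castLE hi j)} ≤ #{j | u ≤ e (κ j)} := by
  set S : Finset (Fin i) := {j | u ≤ e (Fin.castLE hi j)}
  rcases S.eq_empty_or_nonempty with hS | hS
  · simp [hS]
  have hj₀ : u ≤ e (Fin.castLE hi (S.min' hS)) := (mem_filter.1 (S.min'_mem hS)).2
  have hS_le : #S ≤ i - S.min' hS :=
    calc #S ≤ #(Ici (S.min' hS)) := card_le_card fun j hj => mem_Ici.2 (S.min'_le j hj)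
      _ = i - S.min' hS := Fin.card_Ici _
  have hbelow : #{j | ¬u ≤ e (κ j)} ≤ S.min' hS :=
    calc #{j | ¬u ≤ e (κ j)} ≤ #(Iio (Fin.castLE hi (S.min' hS))) := by
          refine card_le_card_of_injOn κ (fun j hj => ?_) hκ.injOn
          simp only [coe_filter, mem_univ, true_and, Set.mem_ofPred_eq] at hj
          exact mem_Iio.2 (lt_of_not_ge fun hle => hj (hj₀.trans (he hle)))
      _ = S.min' hS := by simp
  have := card_filter_add_card_filter_not (s := univ) fun j => u ≤ e (κ j)
  simp only [card_univ, Fintype.card_fin] at this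
  omega

theorem card_mem_Icc_le_card_vanishing_entries {r i : ℕ} (hi : i ≤ r) {c : Fin r → ℕ}
    (hc : Antitone c)
    {κ : Fin i → Fin r} (hκ : Injective κ) (σ : Equiv.Perm (Fin i)) (t : ℤ) :
    #{j : Fin i | t ∈ Icc (1 - (j.rev : ℤ)) (c (Fin.castLE hi j).rev - j.rev)} ≤
      #{j | 1 ≤ t + σ j ∧ t + σ j ≤ c (κ j).rev + κ j} := by
  set e : Fin r → ℤ := fun k => c k.rev + k
  have he : Monotone e := fun a b hab => by
    have := hc (Fin.rev_le_rev.2 hab)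
    simp only [e]
    omega
  set u : ℤ := t + i - 1
  set B : Finset (Fin i) := {j | 1 ≤ t + j.rev}
  set U : Finset (Fin i) := {j | u ≤ e (Fin.castLE hi j)}
  set Bσ : Finset (Fin i) := {j | 1 ≤ t + σ j}
  set Uκ : Finset (Fin i) := {j | u ≤ e (κ j)}
  have hN : ({j | t ∈ Icc (1 - (j.rev : ℤ)) (c (Fin.castLE hi j).rev - j.rev)} :
      Finset (Fin i)) = B ∩ U := by
    ext j
    simp only [B, U, e, u, mem_inter, mem_filter, mem_univ, true_and, mem_Icc, Fin.val_rev,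
      Fin.val_castLE]
    omega
  have hM : Bσ ∩ Uκ ⊆ ({j | 1 ≤ t + σ j ∧ t + σ j ≤ c (κ j).rev + κ j} : Finset (Fin i)) :=
      fun j hj => by
    simp only [Bσ, Uκ, e, u, mem_inter, mem_filter, mem_univ, true_and] at hj ⊢
    have := (σ j).isLt
    omega
  have hB : #Bσ = #B := by
    refine card_equiv (σ.trans Fin.revPerm) fun j => ?_
    simp only [Bσ, B, mem_filter, mem_univ, true_and, Equiv.trans_apply, Fin.revPerm_apply,
      Fin.rev_rev]
  have hU : #U ≤ #Uκ := Fin.card_filter_castLE_le_card_filter hi he hκ u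
  rw [hN]
  rcases (B ∩ U).eq_empty_or_nonempty with h0 | ⟨j₁, hj₁⟩
  -- A lower set `B` and an upper set `U` of `Fin i` that meet cover `Fin i`.
  · simp [h0]
  have hBU : B ∪ U = univ := by
    refine eq_univ_of_forall fun j => ?_
    simp only [B, U, u, mem_union, mem_inter, mem_filter, mem_univ, true_and,
      Fin.val_rev] at hj₁ ⊢
    rcases le_or_gt j₁ j with hle | hlt
    · exact Or.inr (hj₁.2.trans (he ((Fin.castLE_le_castLE_iff hi).2 hle)))
    · exact Or.inl (by have := Fin.lt_def.1 hlt; omega)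
  have h₁ := card_union_add_card_inter B U
  have h₂ := card_union_add_card_inter Bσ Uκ
  have h₃ := card_le_univ (Bσ ∪ Uκ)
  rw [hBU, card_univ] at h₁
  have := card_le_card hM
  simp only [Fintype.card_fin] at h₁ h₃
  omega

theorem prod_range_comp_X_sub_C_eq_prod_Icc (z h : ℂ) (c d : ℕ) :
    (∏ l ∈ range c, (X - C z + C (((l : ℂ) + 1) * h))).comp (X - C ((d : ℂ) * h)) =
      ∏ t ∈ Icc (1 - d : ℤ) (c - d), (X - C (z - t * h)) := by
  rw [Polynomial.prod_comp]
  refine prod_nbij' (fun l => l + 1 - d) (fun t => (t + d - 1).toNat) (fun l hl => ?_)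
    (fun t ht => ?_) (fun l _ => by omega) (fun t ht => ?_) fun l _ => ?_
  · simp only [mem_range, mem_Icc] at hl ⊢; omega
  · simp only [mem_range, mem_Icc] at ht ⊢; omega
  · simp only [mem_Icc] at ht; omega
  · rw [show z - ((l + 1 - d : ℤ) : ℂ) * h = d * h + z - (l + 1) * h by push_cast; ring]
    simp only [sub_comp, add_comp, X_comp, C_comp, C_add, C_sub]
    ring

noncomputable def discWrAlternating (h : ℂ) (i : ℕ) : ℂ[X] [⋀^Fin i]→ₗ[ℂ] ℂ[X] where
  toMultilinearMap :=
    ((Matrix.detRowAlternating : (Fin i → ℂ[X]) [⋀^Fin i]→ₗ[ℂ[X]] ℂ[X]).toMultilinearMap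
      |>.restrictScalars ℂ).compLinearMap fun _ =>
        LinearMap.pi fun m : Fin i => (aeval (X - C (((m : ℕ) : ℂ) * h))).toLinearMap
  map_eq_zero_of_eq' f j j' hf hne :=
    Matrix.detRowAlternating.map_eq_zero_of_eq _ (by simp [hf]) hne

theorem discWr_eq_discWrAlternating (h : ℂ) {i : ℕ} (f : Fin i → ℂ[X]) :
    discWr h f = discWrAlternating h i f := by
  rw [discWr, ← Matrix.det_transpose]
  rfl

theorem pow_dvd_discWr_of_forall_perm {h : ℂ} {i : ℕ} {g : Fin i → ℂ[X]} {q : ℂ[X]} {n : ℕ}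
    (hn : ∀ σ : Equiv.Perm (Fin i), ∃ s : Finset (Fin i), n ≤ #s ∧
      ∀ j ∈ s, q ∣ (g j).comp (X - C (((σ j : ℕ) : ℂ) * h))) :
    q ^ n ∣ discWr h g := by
  rw [discWr, Matrix.det_apply']
  refine dvd_sum fun σ _ => dvd_mul_of_dvd_right ?_ _
  obtain ⟨s, hns, hs⟩ := hn σ
  calc q ^ n ∣ q ^ #s := pow_dvd_pow q hns
    _ = ∏ j ∈ s, q := (prod_const q).symm
    _ ∣ ∏ j ∈ s, (g j).comp (X - C (((σ j : ℕ) : ℂ) * h)) := prod_dvd_prod_of_dvd _ _ hs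
    _ ∣ _ := prod_dvd_prod_of_subset _ _ _ (subset_univ s)

theorem dvd_discWr_of_forall_injective {h : ℂ} {i : ℕ} {ι : Type*} [Fintype ι] {v : ι → ℂ[X]}
    {q : ℂ[X]} (hv : ∀ κ : Fin i → ι, Injective κ → q ∣ discWr h (v ∘ κ)) {f : Fin i → ℂ[X]}
    (hf : ∀ j, f j ∈ Submodule.span ℂ (Set.range v)) : q ∣ discWr h f := by
  rw [discWr_eq_discWrAlternating, ← Ideal.mem_span_singleton, ← Submodule.restrictScalars_mem ℂ]
  refine (discWrAlternating h i).map_mem_of_forall_injective _ (fun κ hκ => ?_) hf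
  rw [Submodule.restrictScalars_mem, Ideal.mem_span_singleton, ← discWr_eq_discWrAlternating]
  exact hv κ hκ

/-- let V be an r-dimensional space of polynomials whose discrete
exponents at z are e_i = c_{r+1−i} + i − 1 (with c₁ ≥ … ≥ c_r), and set
𝒯_k(x) = (x−z+h)⋯(x−z+c_k h).  Then for any f₁,…,f_i ∈ V the discrete
Wronskian Wr(f₁,…,f_i) is divisible by ∏_{j=1}^{i} 𝒯_{r+1−j}(x − (i−j)h). -/
theorem wronskian_divisibility (h : ℂ) (hh : h ≠ 0) (z : ℂ) (r : ℕ)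
    (V : Submodule ℂ (Polynomial ℂ)) (c : Fin r → ℕ) (hc : Antitone c)
    (hexp : ∃ v : Fin r → Polynomial ℂ,
        Submodule.span ℂ (Set.range v) = V ∧ LinearIndependent ℂ v ∧
        ∀ i : Fin r,
          (∀ j : ℕ, 1 ≤ j → j ≤ c (Fin.rev i) + (i : ℕ) →
            (v i).eval (z - (j : ℂ) * h) = 0) ∧
          (v i).eval (z - (((c (Fin.rev i) + (i : ℕ) : ℕ) : ℂ) + 1) * h) ≠ 0)
    (i : ℕ) (hi : i ≤ r) (f : Fin i → Polynomial ℂ) (hf : ∀ j, f j ∈ V) :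
    (∏ j : Fin i,
        (∏ l ∈ Finset.range (c ⟨r - 1 - (j : ℕ), by omega⟩),
          (Polynomial.X - Polynomial.C z + Polynomial.C (((l : ℂ) + 1) * h))).comp
            (Polynomial.X - Polynomial.C (((i - 1 - (j : ℕ) : ℕ) : ℂ) * h)))
      ∣ discWr h f := by
  obtain ⟨v, rfl, -, hv⟩ := hexp
  have hfactor (j : Fin i) : (∏ l ∈ range (c ⟨r - 1 - j, by omega⟩),
      (X - C z + C (((l : ℂ) + 1) * h))).comp (X - C (((i - 1 - j : ℕ) : ℂ) * h)) =
      ∏ t ∈ Icc (1 - (j.rev : ℤ)) (c (Fin.castLE hi j).rev - j.rev), (X - C (z - t * h)) := by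
    have hidx : (⟨r - 1 - j, by omega⟩ : Fin r) = (Fin.castLE hi j).rev := by
      ext
      simp only [Fin.val_rev, Fin.val_castLE]
      omega
    have hshift : i - 1 - j = (j.rev : ℕ) := by simp only [Fin.val_rev]; omega
    rw [hidx, hshift, prod_range_comp_X_sub_C_eq_prod_Icc]
  simp_rw [hfactor]
  refine prod_prod_dvd_of_coprime (F := fun t : ℤ => X - C (z - t * h))
    (pairwise_coprime_X_sub_C fun t t' htt' => ?_) _ _ fun t => ?_
  · simpa [hh] using htt'
  refine dvd_discWr_of_forall_injective (fun κ hκ => ?_) hf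
  refine pow_dvd_discWr_of_forall_perm fun σ =>
    ⟨_, card_mem_Icc_le_card_vanishing_entries hi hc hκ σ t, fun j hj => ?_⟩
  rw [X_sub_C_dvd_comp_X_sub_C_iff]
  simp only [mem_filter, mem_univ, true_and] at hj
  lift t + σ j to ℕ using (by omega) with n hn
  rw [sub_sub, ← add_mul, show (t : ℂ) + (σ j : ℕ) = n by exact_mod_cast hn.symm]
  exact (hv (κ j)).1 n (by omega) (by omega)
end

section
/- Let R ∈ K(τ) be a rational difference operator. Then R admits a unique minimal fractional factorization R = D₀·D₁^{−1} with D₀, D₁ ∈ K[τ], D₁ monic of minimal possible order. Moreover, for any other fractional factorization R = D̃₀·D̃₁^{−1} there exists D ∈ K[τ] with D̃₀ = D₀·D and D̃₁ = D₁·D. -/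
open Polynomial RatFunc

set_option synthInstance.maxHeartbeats 1000000
set_option maxHeartbeats 1600000

lemma aeval_key (h : ℂ) (p : ℂ[X]) : (Polynomial.aeval (RatFunc.X - RatFunc.C h)) p
          = algebraMap ℂ[X] (RatFunc ℂ) (p.comp (Polynomial.X - Polynomial.C h)) := by
  have := Polynomial.aeval_algHom_apply (IsScalarTower.toAlgHom ℂ ℂ[X] (RatFunc ℂ))
    (Polynomial.X - Polynomial.C h) p
  simpa [Polynomial.comp_eq_aeval, map_sub] using this

lemma shiftHom_algebraMap (h : ℂ) (p : ℂ[X]) :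
    shiftHom h (algebraMap ℂ[X] (RatFunc ℂ) p)
      = algebraMap ℂ[X] (RatFunc ℂ) (p.comp (Polynomial.X - Polynomial.C h)) := by
  rw [shiftHom, RatFunc.liftAlgHom_apply, RatFunc.num_algebraMap, RatFunc.denom_algebraMap,
    map_one, div_one, aeval_key]

lemma shiftHom_comp_apply (h h' : ℂ) (f : RatFunc ℂ) :
    shiftHom h (shiftHom h' f) = shiftHom (h' + h) f := by
  induction f using RatFunc.induction_on with
  | f p q hq =>
    rw [map_div₀, map_div₀, map_div₀, shiftHom_algebraMap, shiftHom_algebraMap,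
      shiftHom_algebraMap, shiftHom_algebraMap, shiftHom_algebraMap, Polynomial.comp_assoc,
      Polynomial.comp_assoc]
    have key : (Polynomial.X - Polynomial.C h').comp (Polynomial.X - Polynomial.C h)
        = Polynomial.X - Polynomial.C (h' + h) := by
      simp [Polynomial.sub_comp, sub_sub, map_add, add_comm]
    rw [key, shiftHom_algebraMap]
lemma shiftHom_inv (h : ℂ) (f : RatFunc ℂ) : shiftHom h (shiftHom (-h) f) = f := by
  rw [shiftHom_comp_apply, neg_add_cancel]
  induction f using RatFunc.induction_on with
  | f p q hq => rw [map_div₀, shiftHom_algebraMap, shiftHom_algebraMap]; simp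

noncomputable def sg (h : ℂ) : RatFunc ℂ →+* RatFunc ℂ := (shiftHom h).toRingHom

lemma sg_apply (h : ℂ) (f : RatFunc ℂ) : sg h f = shiftHom h f := rfl

lemma sg_pow_inv (h : ℂ) (n : ℕ) (f : RatFunc ℂ) :
    ((sg h) ^ n) (((sg (-h)) ^ n) f) = f := by
  induction n with
  | zero => simp
  | succ k ih =>
    have e1 : ((sg h) ^ (k+1)) = ((sg h) ^ k).comp (sg h) := by
      rw [pow_succ]; rfl
    have e2 : ((sg (-h)) ^ (k+1)) = (sg (-h)).comp ((sg (-h)) ^ k) := by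
      rw [pow_succ']; rfl
    rw [e1, e2, RingHom.comp_apply, RingHom.comp_apply]
    have : (sg h) ((sg (-h)) (((sg (-h)) ^ k) f)) = ((sg (-h)) ^ k) f :=
      shiftHom_inv h _
    rw [this, ih]

lemma sg_pow_injective (h : ℂ) (n : ℕ) : Function.Injective ((sg h)^n) :=
  RingHom.injective _

lemma sg_X (h : ℂ) : sg h RatFunc.X = RatFunc.X - RatFunc.C h := by
  rw [sg_apply, ← RatFunc.algebraMap_X, shiftHom_algebraMap]
  simp [Polynomial.sub_comp, RatFunc.algebraMap_X]

lemma sg_pow_X (h : ℂ) (n : ℕ) :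
    ((sg h) ^ n) RatFunc.X = RatFunc.X - RatFunc.C ((n : ℂ) * h) := by
  induction n with
  | zero => simp
  | succ k ih =>
    have e1 : ((sg h) ^ (k+1)) = (sg h).comp ((sg h) ^ k) := by
      rw [pow_succ']; rfl
    have hC : ∀ c : ℂ, sg h (RatFunc.C c) = RatFunc.C c := by
      intro c
      rw [sg_apply, ← RatFunc.algebraMap_C]
      rw [shiftHom_algebraMap]
      simp
    rw [e1, RingHom.comp_apply, ih, map_sub, hC, sg_X]
    have : RatFunc.C ((↑(k+1) : ℂ) * h) = RatFunc.C ((k : ℂ) * h) + RatFunc.C h := by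
      rw [← map_add]
      push_cast
      ring_nf
    rw [this]
    ring

/-- The difference operator with coefficients `a 0, …, a r`: Σ_{j=0}^{r} a_j τ^j. -/
noncomputable def opOf (h : ℂ) (a : ℕ → RatFunc ℂ) (r : ℕ) : Module.End ℂ (RatFunc ℂ) :=
  ∑ j ∈ Finset.range (r + 1), mulOp (a j) * (tauOp h) ^ j

/-- `D` is a difference operator, i.e. an element of K[τ]. -/
def IsDiffOp (h : ℂ) (D : Module.End ℂ (RatFunc ℂ)) : Prop :=
  ∃ a r, D = opOf h a r

/-- `D` is a monic difference operator of order `r`. -/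
def IsMonicOfOrder (h : ℂ) (D : Module.End ℂ (RatFunc ℂ)) (r : ℕ) : Prop :=
  ∃ a : ℕ → RatFunc ℂ, D = opOf h a r ∧ a r = 1

/-- `A·B⁻¹ = D₀·D₁⁻¹` as right fractions of difference operators: there is a common
right multiple, i.e. nonzero difference operators U, V with A U = D₀ V and B U = D₁ V.
This is equality in the division ring K(τ) of rational difference operators. -/
def FracEq (h : ℂ) (A B D0 D1 : Module.End ℂ (RatFunc ℂ)) : Prop :=
  ∃ U V : Module.End ℂ (RatFunc ℂ), IsDiffOp h U ∧ IsDiffOp h V ∧ U ≠ 0 ∧ V ≠ 0 ∧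
    A * U = D0 * V ∧ B * U = D1 * V

noncomputable def mulRH : RatFunc ℂ →+* Module.End ℂ (RatFunc ℂ) where
  toFun := mulOp
  map_one' := by ext f; simp [mulOp]
  map_mul' a b := by ext f; simp [mulOp, mul_assoc]
  map_zero' := by ext f; simp [mulOp]
  map_add' a b := by ext f; simp [mulOp, add_mul]

lemma mulRH_apply (a : RatFunc ℂ) : mulRH a = mulOp a := rfl

/-- the key representation map from polynomials to difference operators -/
noncomputable def Phi (h : ℂ) (p : Polynomial (RatFunc ℂ)) : Module.End ℂ (RatFunc ℂ) :=
  Polynomial.eval₂ mulRH (tauOp h) p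

lemma Phi_add (h : ℂ) (p q : Polynomial (RatFunc ℂ)) :
    Phi h (p + q) = Phi h p + Phi h q := Polynomial.eval₂_add _ _

lemma Phi_zero (h : ℂ) : Phi h 0 = 0 := Polynomial.eval₂_zero _ _

lemma Phi_one (h : ℂ) : Phi h 1 = 1 := Polynomial.eval₂_one _ _

lemma Phi_monomial (h : ℂ) (n : ℕ) (a : RatFunc ℂ) :
    Phi h (Polynomial.monomial n a) = mulOp a * (tauOp h) ^ n := Polynomial.eval₂_monomial _ _

lemma Phi_sum (h : ℂ) {ι : Type*} (s : Finset ι) (g : ι → Polynomial (RatFunc ℂ)) :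
    Phi h (∑ i ∈ s, g i) = ∑ i ∈ s, Phi h (g i) := Polynomial.eval₂_finset_sum _ _ _ _

lemma Phi_sub (h : ℂ) (p q : Polynomial (RatFunc ℂ)) :
    Phi h (p - q) = Phi h p - Phi h q := by
  have := Phi_add h (p - q) q
  rw [sub_add_cancel] at this
  rw [this]; abel

lemma tauOp_pow_apply (h : ℂ) (n : ℕ) (f : RatFunc ℂ) :
    ((tauOp h) ^ n) f = ((sg h) ^ n) f := by
  rw [Module.End.pow_apply, RingHom.coe_pow]
  rfl

lemma Phi_apply (h : ℂ) (p : Polynomial (RatFunc ℂ)) (f : RatFunc ℂ) :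
    Phi h p f = ∑ i ∈ Finset.range (p.natDegree + 1), p.coeff i * ((sg h) ^ i) f := by
  rw [Phi, Polynomial.eval₂_eq_sum_range' mulRH (Nat.lt_succ_self _) (tauOp h)]
  rw [LinearMap.sum_apply]
  refine Finset.sum_congr rfl fun i _ => ?_
  rw [Module.End.mul_apply, mulRH_apply, mulOp, LinearMap.mulLeft_apply, tauOp_pow_apply]

noncomputable def sgM (h : ℂ) (n : ℕ) : RatFunc ℂ →* RatFunc ℂ := ((sg h) ^ n).toMonoidHom

lemma sgM_apply (h : ℂ) (n : ℕ) (f : RatFunc ℂ) : sgM h n f = ((sg h) ^ n) f := rfl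

lemma sgM_inj (h : ℂ) (hh : h ≠ 0) : Function.Injective (sgM h) := by
  intro n m hnm
  have hx : ((sg h) ^ n) RatFunc.X = ((sg h) ^ m) RatFunc.X := by
    rw [← sgM_apply, ← sgM_apply, hnm]
  rw [sg_pow_X, sg_pow_X] at hx
  have h2 : RatFunc.C ((n : ℂ) * h) = RatFunc.C ((m : ℂ) * h) := by
    have := congrArg (fun z => RatFunc.X - z) hx
    simpa using this
  have hC : Function.Injective (RatFunc.C : ℂ →+* RatFunc ℂ) := RingHom.injective _
  have h3 : (n : ℂ) = m := mul_right_cancel₀ hh (hC h2)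
  exact_mod_cast h3

lemma Phi_eq_zero_iff (h : ℂ) (hh : h ≠ 0) (p : Polynomial (RatFunc ℂ)) :
    Phi h p = 0 ↔ p = 0 := by
  constructor
  · intro hp
    have li := (linearIndependent_monoidHom (RatFunc ℂ) (RatFunc ℂ)).comp
      (sgM h) (sgM_inj h hh)
    rw [linearIndependent_iff'] at li
    have key := li (Finset.range (p.natDegree + 1)) (fun i => p.coeff i) ?_
    · ext n
      rw [Polynomial.coeff_zero]
      by_cases hn : n < p.natDegree + 1
      · exact key n (Finset.mem_range.mpr hn)
      · exact Polynomial.coeff_eq_zero_of_natDegree_lt (by omega)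
    · funext f
      have h4 := congrArg (fun D : Module.End ℂ (RatFunc ℂ) => D f) hp
      simp only [LinearMap.zero_apply] at h4
      rw [Phi_apply] at h4
      simp only [Finset.sum_apply, Pi.smul_apply, Pi.zero_apply, smul_eq_mul]
      rw [← h4]
      rfl
  · rintro rfl; exact Phi_zero h

lemma Phi_injective (h : ℂ) (hh : h ≠ 0) : Function.Injective (Phi h) := by
  intro p q hpq
  have : Phi h (p - q) = 0 := by rw [Phi_sub, hpq, sub_self]
  have := (Phi_eq_zero_iff h hh _).mp this
  exact sub_eq_zero.mp this

/-- skew multiplication of coefficient polynomials -/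
noncomputable def skmul (h : ℂ) (p q : Polynomial (RatFunc ℂ)) : Polynomial (RatFunc ℂ) :=
  p.sum fun i a => Polynomial.C a * q.map ((sg h) ^ i) * Polynomial.X ^ i

lemma skmul_monomial_left (h : ℂ) (i : ℕ) (a : RatFunc ℂ) (q : Polynomial (RatFunc ℂ)) :
    skmul h (Polynomial.monomial i a) q
      = Polynomial.C a * q.map ((sg h) ^ i) * Polynomial.X ^ i := by
  rw [skmul, Polynomial.sum_monomial_index]
  simp

lemma skmul_add_left (h : ℂ) (p p' q : Polynomial (RatFunc ℂ)) :
    skmul h (p + p') q = skmul h p q + skmul h p' q := by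
  rw [skmul, skmul, skmul, Polynomial.sum_add_index]
  · intro i; simp
  · intro i a b; rw [map_add]; ring

lemma tau_mul (h : ℂ) (b : RatFunc ℂ) :
    tauOp h * mulOp b = mulOp (sg h b) * tauOp h := by
  ext f
  show shiftHom h (b * f) = sg h b * shiftHom h f
  rw [map_mul]
  rfl

lemma tau_pow_mul (h : ℂ) (i : ℕ) (b : RatFunc ℂ) :
    (tauOp h) ^ i * mulOp b = mulOp (((sg h) ^ i) b) * (tauOp h) ^ i := by
  induction i with
  | zero => simp [pow_zero]
  | succ k ih =>
    have e : (tauOp h) ^ (k+1) = tauOp h * (tauOp h) ^ k := by rw [pow_succ']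
    rw [e, mul_assoc, ih, ← mul_assoc, tau_mul, mul_assoc]
    congr 2
    rw [pow_succ']
    rfl

lemma Phi_skmul (h : ℂ) (p q : Polynomial (RatFunc ℂ)) :
    Phi h (skmul h p q) = Phi h p * Phi h q := by
  induction p using Polynomial.induction_on' with
  | add f g hf hg =>
    rw [skmul_add_left, Phi_add, Phi_add, hf, hg, add_mul]
  | monomial i a =>
    rw [skmul_monomial_left, Phi_monomial]
    induction q using Polynomial.induction_on' with
    | add f g hf hg =>
      rw [Polynomial.map_add, mul_add, add_mul, Phi_add, hf, hg, Phi_add, mul_add]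
    | monomial j b =>
      rw [Polynomial.map_monomial, Phi_monomial]
      have e1 : Polynomial.C a * Polynomial.monomial j (((sg h) ^ i) b) * Polynomial.X ^ i
          = Polynomial.monomial (j + i) (a * ((sg h) ^ i) b) := by
        rw [Polynomial.C_mul_monomial, Polynomial.monomial_mul_X_pow]
      rw [e1, Phi_monomial]
      have e2 : mulOp (a * ((sg h) ^ i) b) = mulOp a * mulOp (((sg h) ^ i) b) := by
        rw [← mulRH_apply, ← mulRH_apply, ← mulRH_apply, map_mul]
      rw [e2, mul_assoc, mul_assoc, ← mul_assoc ((tauOp h) ^ i), tau_pow_mul,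
        mul_assoc, ← pow_add, add_comm j i]

lemma skmul_natDegree_le (h : ℂ) (p q : Polynomial (RatFunc ℂ)) :
    (skmul h p q).natDegree ≤ p.natDegree + q.natDegree := by
  rw [skmul, Polynomial.sum]
  refine Polynomial.natDegree_sum_le_of_forall_le _ _ fun i hi => ?_
  have h1 := Polynomial.natDegree_mul_le
    (p := Polynomial.C (p.coeff i) * q.map ((sg h) ^ i)) (q := (Polynomial.X : Polynomial (RatFunc ℂ)) ^ i)
  have h2 := Polynomial.natDegree_mul_le (p := Polynomial.C (p.coeff i)) (q := q.map ((sg h) ^ i))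
  have h3 : (q.map ((sg h) ^ i)).natDegree ≤ q.natDegree := Polynomial.natDegree_map_le
  have h4 : ((Polynomial.X : Polynomial (RatFunc ℂ)) ^ i).natDegree ≤ i := by
    simpa using Polynomial.natDegree_X_pow_le (R := RatFunc ℂ) i
  have h5 : i ≤ p.natDegree := Polynomial.le_natDegree_of_mem_supp i hi
  have h6 : (Polynomial.C (p.coeff i)).natDegree = 0 := Polynomial.natDegree_C _
  omega

lemma skmul_coeff_top (h : ℂ) (p q : Polynomial (RatFunc ℂ)) :
    (skmul h p q).coeff (p.natDegree + q.natDegree)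
      = p.leadingCoeff * (((sg h) ^ p.natDegree) q.leadingCoeff) := by
  rw [skmul, Polynomial.sum, Polynomial.finset_sum_coeff]
  rw [Finset.sum_eq_single p.natDegree]
  · rw [Polynomial.coeff_mul_X_pow', if_pos (by omega)]
    rw [show p.natDegree + q.natDegree - p.natDegree = q.natDegree from by omega,
      Polynomial.coeff_C_mul, Polynomial.coeff_map]
    rfl
  · intro i hi hne
    have h5 : i ≤ p.natDegree := Polynomial.le_natDegree_of_mem_supp i hi
    have h5' : i < p.natDegree := lt_of_le_of_ne h5 hne
    rw [Polynomial.coeff_mul_X_pow', if_pos (by omega)]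
    rw [Polynomial.coeff_C_mul, Polynomial.coeff_map]
    have : q.coeff (p.natDegree + q.natDegree - i) = 0 :=
      Polynomial.coeff_eq_zero_of_natDegree_lt (by omega)
    rw [this, map_zero, mul_zero]
  · intro hns
    have : p.coeff p.natDegree = 0 := Polynomial.notMem_support_iff.mp hns
    rw [this, map_zero, zero_mul, zero_mul, Polynomial.coeff_zero]

lemma skmul_ne_zero (h : ℂ) {p q : Polynomial (RatFunc ℂ)} (hp : p ≠ 0) (hq : q ≠ 0) :
    skmul h p q ≠ 0 := by
  intro hz
  have := skmul_coeff_top h p q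
  rw [hz, Polynomial.coeff_zero] at this
  have h1 : p.leadingCoeff ≠ 0 := Polynomial.leadingCoeff_ne_zero.mpr hp
  have h2 : ((sg h) ^ p.natDegree) q.leadingCoeff ≠ 0 := by
    intro h0
    exact Polynomial.leadingCoeff_ne_zero.mpr hq (sg_pow_injective h p.natDegree (by rw [h0, map_zero]))
  exact h2 (by
    have := this.symm
    rcases mul_eq_zero.mp this with h' | h'
    · exact absurd h' h1
    · exact h')

lemma skmul_natDegree (h : ℂ) {p q : Polynomial (RatFunc ℂ)} (hp : p ≠ 0) (hq : q ≠ 0) :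
    (skmul h p q).natDegree = p.natDegree + q.natDegree := by
  refine le_antisymm (skmul_natDegree_le h p q) ?_
  refine Polynomial.le_natDegree_of_ne_zero ?_
  rw [skmul_coeff_top]
  have h1 : p.leadingCoeff ≠ 0 := Polynomial.leadingCoeff_ne_zero.mpr hp
  have h2 : ((sg h) ^ p.natDegree) q.leadingCoeff ≠ 0 := by
    intro h0
    exact Polynomial.leadingCoeff_ne_zero.mpr hq (sg_pow_injective h p.natDegree (by rw [h0, map_zero]))
  exact mul_ne_zero h1 h2

lemma skmul_leadingCoeff (h : ℂ) {p q : Polynomial (RatFunc ℂ)} (hp : p ≠ 0) (hq : q ≠ 0) :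
    (skmul h p q).leadingCoeff = p.leadingCoeff * (((sg h) ^ p.natDegree) q.leadingCoeff) := by
  rw [Polynomial.leadingCoeff, skmul_natDegree h hp hq, skmul_coeff_top]

lemma skmul_assoc (h : ℂ) (hh : h ≠ 0) (p q r : Polynomial (RatFunc ℂ)) :
    skmul h (skmul h p q) r = skmul h p (skmul h q r) := by
  apply Phi_injective h hh
  rw [Phi_skmul, Phi_skmul, Phi_skmul, Phi_skmul, mul_assoc]

lemma skmul_add_right (h : ℂ) (hh : h ≠ 0) (p q q' : Polynomial (RatFunc ℂ)) :
    skmul h p (q + q') = skmul h p q + skmul h p q' := by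
  apply Phi_injective h hh
  rw [Phi_add, Phi_skmul, Phi_skmul, Phi_skmul, Phi_add, mul_add]

lemma skmul_sub_right (h : ℂ) (hh : h ≠ 0) (p q q' : Polynomial (RatFunc ℂ)) :
    skmul h p (q - q') = skmul h p q - skmul h p q' := by
  apply Phi_injective h hh
  rw [Phi_sub, Phi_skmul, Phi_skmul, Phi_skmul, Phi_sub, mul_sub]

lemma skmul_one_right (h : ℂ) (hh : h ≠ 0) (p : Polynomial (RatFunc ℂ)) :
    skmul h p 1 = p := by
  apply Phi_injective h hh
  rw [Phi_skmul, Phi_one, mul_one]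

lemma skmul_zero_right (h : ℂ) (hh : h ≠ 0) (p : Polynomial (RatFunc ℂ)) :
    skmul h p 0 = 0 := by
  apply Phi_injective h hh
  rw [Phi_skmul, Phi_zero, mul_zero]

lemma skdiv_step (h : ℂ) (hh : h ≠ 0) {q p : Polynomial (RatFunc ℂ)} (hq : q ≠ 0)
    (hp0 : p ≠ 0) (hlt : q.degree ≤ p.degree) :
    ∃ t, t ≠ 0 ∧ (p - skmul h q t).degree < p.degree := by
  set c : RatFunc ℂ := ((sg (-h)) ^ q.natDegree) (q.leadingCoeff⁻¹ * p.leadingCoeff) with hc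
  have htc : c ≠ 0 := by
    intro h0
    have hker : q.leadingCoeff⁻¹ * p.leadingCoeff = 0 :=
      sg_pow_injective (-h) q.natDegree (by rw [← hc, h0, map_zero])
    exact mul_ne_zero (inv_ne_zero (Polynomial.leadingCoeff_ne_zero.mpr hq))
      (Polynomial.leadingCoeff_ne_zero.mpr hp0) hker
  set t : Polynomial (RatFunc ℂ) := Polynomial.monomial (p.natDegree - q.natDegree) c with ht
  have ht0 : t ≠ 0 := fun hz => htc ((Polynomial.monomial_eq_zero_iff _ _).mp hz)
  have hqd : q.natDegree ≤ p.natDegree := Polynomial.natDegree_le_natDegree hlt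
  have hnd : (skmul h q t).natDegree = p.natDegree := by
    rw [skmul_natDegree h hq ht0, ht, Polynomial.natDegree_monomial_eq _ htc]
    omega
  have hlc : (skmul h q t).leadingCoeff = p.leadingCoeff := by
    rw [skmul_leadingCoeff h hq ht0, ht, Polynomial.leadingCoeff_monomial, hc, sg_pow_inv,
      ← mul_assoc, mul_inv_cancel₀ (Polynomial.leadingCoeff_ne_zero.mpr hq), one_mul]
  have hsne : skmul h q t ≠ 0 := skmul_ne_zero h hq ht0
  have hdeq : p.degree = (skmul h q t).degree := by
    rw [Polynomial.degree_eq_natDegree hp0, Polynomial.degree_eq_natDegree hsne, hnd]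
  exact ⟨t, ht0, Polynomial.degree_sub_lt hdeq hp0 hlc.symm⟩

lemma skdiv (h : ℂ) (hh : h ≠ 0) (q : Polynomial (RatFunc ℂ)) (hq : q ≠ 0) :
    ∀ n (p : Polynomial (RatFunc ℂ)), p.natDegree ≤ n →
      ∃ c r, p = skmul h q c + r ∧ r.degree < q.degree := by
  intro n
  induction n with
  | zero =>
    intro p hp
    by_cases hlt : p.degree < q.degree
    · exact ⟨0, p, by rw [skmul_zero_right h hh, zero_add], hlt⟩
    · push_neg at hlt
      have hp0 : p ≠ 0 := by
        intro hz
        rw [hz, Polynomial.degree_zero, le_bot_iff, Polynomial.degree_eq_bot] at hlt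
        exact hq hlt
      obtain ⟨t, ht0, hsub⟩ := skdiv_step h hh hq hp0 hlt
      have hz : p - skmul h q t = 0 := by
        by_contra hnz
        have h1 : (p - skmul h q t).natDegree < p.natDegree :=
          Polynomial.natDegree_lt_natDegree hnz hsub
        omega
      refine ⟨t, 0, by rw [add_zero, ← sub_eq_zero, hz], ?_⟩
      rw [Polynomial.degree_zero]
      exact bot_lt_iff_ne_bot.mpr (fun hb => hq (Polynomial.degree_eq_bot.mp hb))
  | succ n ih =>
    intro p hp
    by_cases hlt : p.degree < q.degree
    · exact ⟨0, p, by rw [skmul_zero_right h hh, zero_add], hlt⟩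
    · push_neg at hlt
      have hp0 : p ≠ 0 := by
        intro hz
        rw [hz, Polynomial.degree_zero, le_bot_iff, Polynomial.degree_eq_bot] at hlt
        exact hq hlt
      obtain ⟨t, ht0, hsub⟩ := skdiv_step h hh hq hp0 hlt
      by_cases hz : p - skmul h q t = 0
      · refine ⟨t, 0, by rw [add_zero, ← sub_eq_zero, hz], ?_⟩
        rw [Polynomial.degree_zero]
        exact bot_lt_iff_ne_bot.mpr (fun hb => hq (Polynomial.degree_eq_bot.mp hb))
      · have h1 : (p - skmul h q t).natDegree < p.natDegree :=
          Polynomial.natDegree_lt_natDegree hz hsub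
        obtain ⟨c, r, hcr, hr⟩ := ih (p - skmul h q t) (by omega)
        refine ⟨t + c, r, ?_, hr⟩
        rw [skmul_add_right h hh, add_assoc, ← hcr]
        ring

lemma ore (h : ℂ) (hh : h ≠ 0) :
    ∀ n (u u' : Polynomial (RatFunc ℂ)), u ≠ 0 → u' ≠ 0 → u'.natDegree ≤ n →
      ∃ w w', w ≠ 0 ∧ w' ≠ 0 ∧ skmul h u w = skmul h u' w' := by
  intro n
  induction n with
  | zero =>
    intro u u' hu hu' hd
    obtain ⟨c, r, hcr, hr⟩ := skdiv h hh u' hu' u.natDegree u le_rfl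
    have hrz : r = 0 := by
      by_contra hnz
      have := Polynomial.natDegree_lt_natDegree hnz hr
      omega
    rw [hrz, add_zero] at hcr
    have hc0 : c ≠ 0 := by
      intro hz
      rw [hz, skmul_zero_right h hh] at hcr
      exact hu hcr
    exact ⟨1, c, one_ne_zero, hc0, by rw [skmul_one_right h hh, hcr]⟩
  | succ n ih =>
    intro u u' hu hu' hd
    obtain ⟨c, r, hcr, hr⟩ := skdiv h hh u' hu' u.natDegree u le_rfl
    by_cases hrz : r = 0
    · rw [hrz, add_zero] at hcr
      have hc0 : c ≠ 0 := by
        intro hz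
        rw [hz, skmul_zero_right h hh] at hcr
        exact hu hcr
      exact ⟨1, c, one_ne_zero, hc0, by rw [skmul_one_right h hh, hcr]⟩
    · have hrd : r.natDegree < u'.natDegree := Polynomial.natDegree_lt_natDegree hrz hr
      obtain ⟨w1, w1', hw1, hw1', hrel⟩ := ih u' r hu' hrz (by omega)
      refine ⟨w1', skmul h c w1' + w1, hw1', ?_, ?_⟩
      · intro hz
        have : skmul h u w1' = 0 := by
          rw [hcr, skmul_add_left, skmul_assoc h hh, ← hrel, ← skmul_add_right h hh, hz,
            skmul_zero_right h hh]
        exact skmul_ne_zero h hu hw1' this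
      · rw [hcr, skmul_add_left, skmul_assoc h hh, ← hrel, ← skmul_add_right h hh]

lemma skmul_sub_left (h : ℂ) (hh : h ≠ 0) (p p' q : Polynomial (RatFunc ℂ)) :
    skmul h (p - p') q = skmul h p q - skmul h p' q := by
  apply Phi_injective h hh
  rw [Phi_sub, Phi_skmul, Phi_skmul, Phi_skmul, Phi_sub, sub_mul]

lemma skmul_zero_left (h : ℂ) (hh : h ≠ 0) (q : Polynomial (RatFunc ℂ)) :
    skmul h 0 q = 0 := by
  apply Phi_injective h hh
  rw [Phi_skmul, Phi_zero, zero_mul]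

/-- the coefficient polynomial attached to a coefficient function -/
noncomputable def polyOf (a : ℕ → RatFunc ℂ) (r : ℕ) : Polynomial (RatFunc ℂ) :=
  ∑ j ∈ Finset.range (r + 1), Polynomial.monomial j (a j)

lemma polyOf_coeff (a : ℕ → RatFunc ℂ) (r k : ℕ) :
    (polyOf a r).coeff k = if k ≤ r then a k else 0 := by
  rw [polyOf, Polynomial.finset_sum_coeff]
  by_cases hk : k ≤ r
  · rw [if_pos hk, Finset.sum_eq_single k]
    · rw [Polynomial.coeff_monomial, if_pos rfl]
    · intro j _ hj
      rw [Polynomial.coeff_monomial, if_neg hj]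
    · intro hk'
      exact absurd (Finset.mem_range.mpr (by omega)) hk'
  · rw [if_neg hk]
    refine Finset.sum_eq_zero fun j hj => ?_
    rw [Polynomial.coeff_monomial, if_neg (by simp at hj; omega)]

lemma opOf_eq_Phi (h : ℂ) (a : ℕ → RatFunc ℂ) (r : ℕ) :
    opOf h a r = Phi h (polyOf a r) := by
  rw [opOf, polyOf, Phi_sum]
  exact Finset.sum_congr rfl fun j _ => (Phi_monomial h j (a j)).symm

lemma Phi_eq_opOf (h : ℂ) (p : Polynomial (RatFunc ℂ)) :
    Phi h p = opOf h (fun i => p.coeff i) p.natDegree := by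
  rw [opOf, Phi, Polynomial.eval₂_eq_sum_range' mulRH (Nat.lt_succ_self _) (tauOp h)]
  exact Finset.sum_congr rfl fun i _ => rfl

lemma isDiffOp_iff (h : ℂ) (D : Module.End ℂ (RatFunc ℂ)) :
    IsDiffOp h D ↔ ∃ p, D = Phi h p := by
  constructor
  · rintro ⟨a, r, rfl⟩
    exact ⟨polyOf a r, opOf_eq_Phi h a r⟩
  · rintro ⟨p, rfl⟩
    exact ⟨fun i => p.coeff i, p.natDegree, Phi_eq_opOf h p⟩

lemma isMonicOfOrder_iff (h : ℂ) (D : Module.End ℂ (RatFunc ℂ)) (n : ℕ) :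
    IsMonicOfOrder h D n ↔ ∃ p : Polynomial (RatFunc ℂ),
      p.Monic ∧ p.natDegree = n ∧ D = Phi h p := by
  constructor
  · rintro ⟨a, rfl, han⟩
    refine ⟨polyOf a n, ?_, ?_, opOf_eq_Phi h a n⟩
    · rw [Polynomial.Monic, Polynomial.leadingCoeff]
      have hnd : (polyOf a n).natDegree = n := ?_
      · rw [hnd, polyOf_coeff, if_pos le_rfl, han]
      · refine le_antisymm ?_ ?_
        · refine Polynomial.natDegree_sum_le_of_forall_le _ _ fun j hj => ?_
          exact (Polynomial.natDegree_monomial_le _).trans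
            (by have := Finset.mem_range.mp hj; omega)
        · refine Polynomial.le_natDegree_of_ne_zero ?_
          rw [polyOf_coeff, if_pos le_rfl, han]
          exact one_ne_zero
    · refine le_antisymm ?_ ?_
      · refine Polynomial.natDegree_sum_le_of_forall_le _ _ fun j hj => ?_
        exact (Polynomial.natDegree_monomial_le _).trans (by have := Finset.mem_range.mp hj; omega)
      · refine Polynomial.le_natDegree_of_ne_zero ?_
        rw [polyOf_coeff, if_pos le_rfl, han]
        exact one_ne_zero
  · rintro ⟨p, hm, hnd, rfl⟩
    refine ⟨fun i => p.coeff i, ?_, ?_⟩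
    · rw [Phi_eq_opOf, hnd]
    · rw [← hnd]
      exact hm

lemma sknormalize (h : ℂ) (hh : h ≠ 0) {b : Polynomial (RatFunc ℂ)} (hb : b ≠ 0) :
    ∃ y : Polynomial (RatFunc ℂ), y ≠ 0 ∧ (skmul h b y).Monic ∧
      (skmul h b y).natDegree = b.natDegree := by
  set c : RatFunc ℂ := ((sg (-h)) ^ b.natDegree) b.leadingCoeff⁻¹ with hc
  have hc0 : c ≠ 0 := by
    intro h0
    have : b.leadingCoeff⁻¹ = 0 :=
      sg_pow_injective (-h) b.natDegree (by rw [← hc, h0, map_zero])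
    exact inv_ne_zero (Polynomial.leadingCoeff_ne_zero.mpr hb) this
  refine ⟨Polynomial.C c, fun hz => hc0 (by simpa using hz), ?_, ?_⟩
  · rw [Polynomial.Monic, skmul_leadingCoeff h hb (fun hz => hc0 (by simpa using hz)),
      Polynomial.leadingCoeff_C, hc, sg_pow_inv,
      mul_inv_cancel₀ (Polynomial.leadingCoeff_ne_zero.mpr hb)]
  · rw [skmul_natDegree h hb (fun hz => hc0 (by simpa using hz)), Polynomial.natDegree_C,
      add_zero]

/-- polynomial-level fraction equality -/
def PFp (h : ℂ) (pa pb d0 d1 : Polynomial (RatFunc ℂ)) : Prop :=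
  ∃ u v : Polynomial (RatFunc ℂ), u ≠ 0 ∧ v ≠ 0 ∧
    skmul h pa u = skmul h d0 v ∧ skmul h pb u = skmul h d1 v

lemma fracEq_iff (h : ℂ) (hh : h ≠ 0) (pa pb d0 d1 : Polynomial (RatFunc ℂ)) :
    FracEq h (Phi h pa) (Phi h pb) (Phi h d0) (Phi h d1) ↔ PFp h pa pb d0 d1 := by
  constructor
  · rintro ⟨U, V, hU, hV, hU0, hV0, h1, h2⟩
    obtain ⟨u, rfl⟩ := (isDiffOp_iff h U).mp hU
    obtain ⟨v, rfl⟩ := (isDiffOp_iff h V).mp hV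
    refine ⟨u, v, ?_, ?_, ?_, ?_⟩
    · intro hz; rw [hz, Phi_zero] at hU0; exact hU0 rfl
    · intro hz; rw [hz, Phi_zero] at hV0; exact hV0 rfl
    · exact Phi_injective h hh (by rw [Phi_skmul, Phi_skmul, h1])
    · exact Phi_injective h hh (by rw [Phi_skmul, Phi_skmul, h2])
  · rintro ⟨u, v, hu, hv, h1, h2⟩
    refine ⟨Phi h u, Phi h v, (isDiffOp_iff h _).mpr ⟨u, rfl⟩, (isDiffOp_iff h _).mpr ⟨v, rfl⟩,
      ?_, ?_, ?_, ?_⟩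
    · intro hz; exact hu ((Phi_eq_zero_iff h hh u).mp hz)
    · intro hz; exact hv ((Phi_eq_zero_iff h hh v).mp hz)
    · rw [← Phi_skmul, ← Phi_skmul, h1]
    · rw [← Phi_skmul, ← Phi_skmul, h2]

lemma pf_right_mul (h : ℂ) (hh : h ≠ 0) {pa pb d0 d1 y : Polynomial (RatFunc ℂ)}
    (hpf : PFp h pa pb d0 d1) (hy : y ≠ 0) :
    PFp h pa pb (skmul h d0 y) (skmul h d1 y) := by
  obtain ⟨u, v, hu, hv, h1, h2⟩ := hpf
  obtain ⟨z, z', hz, hz', hrel⟩ := ore h hh y.natDegree v y hv hy le_rfl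
  refine ⟨skmul h u z, z', skmul_ne_zero h hu hz, hz', ?_, ?_⟩
  · rw [← skmul_assoc h hh, h1, skmul_assoc h hh, hrel, ← skmul_assoc h hh]
  · rw [← skmul_assoc h hh, h2, skmul_assoc h hh, hrel, ← skmul_assoc h hh]

lemma pf_divides (h : ℂ) (hh : h ≠ 0) {pa pb d0 d1 : Polynomial (RatFunc ℂ)} {n : ℕ}
    (hm : d1.Monic) (hnd : d1.natDegree = n)
    (hpf : PFp h pa pb d0 d1)
    (hmin : ∀ (m : ℕ) (d0' d1' : Polynomial (RatFunc ℂ)), d1'.Monic → d1'.natDegree = m →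
      PFp h pa pb d0' d1' → n ≤ m)
    {e0 e1 : Polynomial (RatFunc ℂ)} (he1 : e1 ≠ 0) (hpf' : PFp h pa pb e0 e1) :
    ∃ d, e0 = skmul h d0 d ∧ e1 = skmul h d1 d := by
  have hd1 : d1 ≠ 0 := hm.ne_zero
  obtain ⟨u, v, hu, hv, h1, h2⟩ := hpf
  obtain ⟨u', v', hu', hv', h1', h2'⟩ := hpf'
  obtain ⟨w, w', hw, hw', hww⟩ := ore h hh u'.natDegree u u' hu hu' le_rfl
  set s := skmul h v w with hs
  set tt := skmul h v' w' with htt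
  have hs0 : s ≠ 0 := skmul_ne_zero h hv hw
  have htt0 : tt ≠ 0 := skmul_ne_zero h hv' hw'
  have E0 : skmul h d0 s = skmul h e0 tt := by
    rw [hs, htt, ← skmul_assoc h hh, ← skmul_assoc h hh, ← h1, ← h1',
      skmul_assoc h hh, skmul_assoc h hh, hww]
  have E1 : skmul h d1 s = skmul h e1 tt := by
    rw [hs, htt, ← skmul_assoc h hh, ← skmul_assoc h hh, ← h2, ← h2',
      skmul_assoc h hh, skmul_assoc h hh, hww]
  obtain ⟨c, r, hcr, hr⟩ := skdiv h hh d1 hd1 e1.natDegree e1 le_rfl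
  set s' := s - skmul h c tt with hs'
  have E1' : skmul h d1 s' = skmul h r tt := by
    rw [hs', skmul_sub_right h hh, E1, hcr, skmul_add_left, skmul_assoc h hh,
      add_sub_cancel_left]
  have E0' : skmul h (e0 - skmul h d0 c) tt = skmul h d0 s' := by
    rw [skmul_sub_left h hh, hs', skmul_sub_right h hh, E0, skmul_assoc h hh]
  have hrz : r = 0 := by
    by_contra hrn
    -- then s' ≠ 0, and we can build a monic fractional factorization of smaller order
    have hs'0 : s' ≠ 0 := by
      intro hz
      rw [hz, skmul_zero_right h hh] at E1'
      exact skmul_ne_zero h hrn htt0 E1'.symm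
    -- PFp pa pb (e0 - skmul d0 c) r
    obtain ⟨z, z', hz, hz', hrel⟩ := ore h hh s'.natDegree v s' hv hs'0 le_rfl
    have hpfr : PFp h pa pb (e0 - skmul h d0 c) r := by
      refine ⟨skmul h u z, skmul h tt z', skmul_ne_zero h hu hz,
        skmul_ne_zero h htt0 hz', ?_, ?_⟩
      · have a1 : skmul h pa (skmul h u z) = skmul h d0 (skmul h v z) := by
          rw [← skmul_assoc h hh, h1, skmul_assoc h hh]
        rw [a1, hrel, ← skmul_assoc h hh, ← E0', skmul_assoc h hh]
      · have a2 : skmul h pb (skmul h u z) = skmul h d1 (skmul h v z) := by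
          rw [← skmul_assoc h hh, h2, skmul_assoc h hh]
        rw [a2, hrel, ← skmul_assoc h hh, E1', skmul_assoc h hh]
    obtain ⟨y, hy0, hym, hynd⟩ := sknormalize h hh hrn
    have hpfy := pf_right_mul h hh hpfr hy0
    have hle := hmin (skmul h r y).natDegree _ _ hym rfl hpfy
    rw [hynd] at hle
    have : r.natDegree < n := by
      rw [← hnd]
      exact Polynomial.natDegree_lt_natDegree hrn hr
    omega
  rw [hrz, add_zero] at hcr
  have hs'z : s' = 0 := by
    by_contra hnz
    rw [hrz, skmul_zero_left h hh] at E1'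
    exact skmul_ne_zero h hd1 hnz E1'
  have he0 : e0 - skmul h d0 c = 0 := by
    by_contra hnz
    rw [hs'z, skmul_zero_right h hh] at E0'
    exact skmul_ne_zero h hnz htt0 E0'
  exact ⟨c, sub_eq_zero.mp he0, hcr⟩

lemma pf_exists (h : ℂ) (hh : h ≠ 0) (pa pb : Polynomial (RatFunc ℂ)) (hpb : pb ≠ 0) :
    ∃ (n : ℕ) (d0 d1 : Polynomial (RatFunc ℂ)), d1.Monic ∧ d1.natDegree = n ∧ PFp h pa pb d0 d1 := by
  obtain ⟨y, hy0, hym, hynd⟩ := sknormalize h hh hpb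
  exact ⟨pb.natDegree, skmul h pa y, skmul h pb y, hym, hynd,
    ⟨y, 1, hy0, one_ne_zero, by rw [skmul_one_right h hh], by rw [skmul_one_right h hh]⟩⟩

/-- any rational difference operator R = A·B⁻¹ has a unique minimal
fractional factorization R = D₀·D₁⁻¹ with D₁ monic of minimal possible order; moreover
any other fractional factorization R = D̃₀·D̃₁⁻¹ satisfies D̃₀ = D₀·D, D̃₁ = D₁·D for
some difference operator D. -/
theorem minimal_fractional_factorization (h : ℂ) (hh : h ≠ 0)
    (A B : Module.End ℂ (RatFunc ℂ)) (hA : IsDiffOp h A) (hB : IsDiffOp h B)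
    (hB0 : B ≠ 0) :
    ∃! P : Module.End ℂ (RatFunc ℂ) × Module.End ℂ (RatFunc ℂ),
      ∃ n : ℕ, IsDiffOp h P.1 ∧ IsMonicOfOrder h P.2 n ∧ FracEq h A B P.1 P.2 ∧
        (∀ D0' D1' n', IsDiffOp h D0' → IsMonicOfOrder h D1' n' →
          FracEq h A B D0' D1' → n ≤ n') ∧
        (∀ D0' D1', IsDiffOp h D0' → IsDiffOp h D1' → D1' ≠ 0 →
          FracEq h A B D0' D1' →
          ∃ D : Module.End ℂ (RatFunc ℂ), IsDiffOp h D ∧ D0' = P.1 * D ∧ D1' = P.2 * D) := by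
  classical
  obtain ⟨pa, hpa⟩ := (isDiffOp_iff h A).mp hA
  obtain ⟨pb, hpb⟩ := (isDiffOp_iff h B).mp hB
  have hpb0 : pb ≠ 0 := fun hz => hB0 (by rw [hpb, hz, Phi_zero])
  have hex : ∃ n, ∃ d0 d1 : Polynomial (RatFunc ℂ),
      d1.Monic ∧ d1.natDegree = n ∧ PFp h pa pb d0 d1 := by
    obtain ⟨n, d0, d1, hm, hnd, hpf⟩ := pf_exists h hh pa pb hpb0
    exact ⟨n, d0, d1, hm, hnd, hpf⟩
  set n0 := Nat.find hex with hn0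
  obtain ⟨d0, d1, hm, hnd, hpf⟩ := Nat.find_spec hex
  have hmin : ∀ (m : ℕ) (d0' d1' : Polynomial (RatFunc ℂ)), d1'.Monic → d1'.natDegree = m →
      PFp h pa pb d0' d1' → n0 ≤ m := by
    intro m d0' d1' ha hb hc
    exact Nat.find_min' hex ⟨d0', d1', ha, hb, hc⟩
  have hFrac : FracEq h A B (Phi h d0) (Phi h d1) := by
    rw [hpa, hpb]
    exact (fracEq_iff h hh pa pb d0 d1).mpr hpf
  have hIsD0 : IsDiffOp h (Phi h d0) := (isDiffOp_iff h _).mpr ⟨d0, rfl⟩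
  have hIsM1 : IsMonicOfOrder h (Phi h d1) n0 := (isMonicOfOrder_iff h _ n0).mpr ⟨d1, hm, hnd, rfl⟩
  refine ⟨(Phi h d0, Phi h d1), ⟨n0, hIsD0, hIsM1, hFrac, ?_, ?_⟩, ?_⟩
  · -- minimality
    intro D0' D1' n' hD0 hM hF
    obtain ⟨e1, he1m, he1nd, rfl⟩ := (isMonicOfOrder_iff h D1' n').mp hM
    obtain ⟨e0, rfl⟩ := (isDiffOp_iff h D0').mp hD0
    rw [hpa, hpb] at hF
    exact hmin n' e0 e1 he1m he1nd ((fracEq_iff h hh pa pb e0 e1).mp hF)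
  · -- divisibility
    intro D0' D1' hD0 hD1 hne hF
    obtain ⟨e1, rfl⟩ := (isDiffOp_iff h D1').mp hD1
    obtain ⟨e0, rfl⟩ := (isDiffOp_iff h D0').mp hD0
    have he1 : e1 ≠ 0 := fun hz => hne (by rw [hz, Phi_zero])
    rw [hpa, hpb] at hF
    obtain ⟨d, hd0, hd1⟩ := pf_divides h hh hm hnd hpf hmin he1
      ((fracEq_iff h hh pa pb e0 e1).mp hF)
    exact ⟨Phi h d, (isDiffOp_iff h _).mpr ⟨d, rfl⟩, by rw [hd0, Phi_skmul],
      by rw [hd1, Phi_skmul]⟩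
  · -- uniqueness
    rintro ⟨Q0, Q1⟩ ⟨m, hQ0d, hQ1m, hQF, hQmin, hQdiv⟩
    obtain ⟨q1, hq1m, hq1nd, rfl⟩ := (isMonicOfOrder_iff h Q1 m).mp hQ1m
    obtain ⟨q0, rfl⟩ := (isDiffOp_iff h Q0).mp hQ0d
    have hq1 : q1 ≠ 0 := hq1m.ne_zero
    rw [hpa, hpb] at hQF
    obtain ⟨d, hd0, hd1⟩ := pf_divides h hh hm hnd hpf hmin hq1
      ((fracEq_iff h hh pa pb q0 q1).mp hQF)
    have hmn : m ≤ n0 := hQmin (Phi h d0) (Phi h d1) n0 hIsD0 hIsM1 hFrac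
    have hd1' : d1 ≠ 0 := hm.ne_zero
    have hdz : d ≠ 0 := by
      intro hz
      rw [hz, skmul_zero_right h hh] at hd1
      exact hq1 hd1
    have hdeg : m = n0 + d.natDegree := by
      rw [← hq1nd, hd1, skmul_natDegree h hd1' hdz, hnd]
    have hd0deg : d.natDegree = 0 := by omega
    have hlcd : d.leadingCoeff = 1 := by
      have := hq1m
      rw [Polynomial.Monic, hd1, skmul_leadingCoeff h hd1' hdz, hm, one_mul, hnd] at this
      have h1 : ((sg h) ^ n0) d.leadingCoeff = ((sg h) ^ n0) 1 := by
        rw [this, map_one]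
      exact sg_pow_injective h n0 h1
    have hdone : d = 1 := by
      obtain ⟨a, ha⟩ := Polynomial.natDegree_eq_zero.mp hd0deg
      have : a = 1 := by
        rw [← Polynomial.leadingCoeff_C a, ha, hlcd]
      rw [← ha, this, map_one]
    rw [hdone, skmul_one_right h hh] at hd0 hd1
    rw [hd0, hd1]
end

section
/- Let θ be a primitive p-th root of unity and set ϑ_i = 1/(θ^i − 1) for i = 1,…,p−1. Then (x+1)^p − x^p = p·∏_{i=1}^{p−1}(x − ϑ_i). Moreover ϑ_i − ϑ_j ∉ Z for i ≠ j (in particular ϑ_i − ϑ_j ≠ 0, 1), and ϑ_i ∉ Z for all i. -/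
/-!
Homogenising `Y ^ p - 1 = ∏ (Y - θ ^ i)` gives `(x + 1) ^ p - x ^ p = ∏ (x + 1 - θ ^ i x)`; the
factor `i = 0` is `1`, the others are `(1 - θ ^ i) (x - ϑ_i)`, and `∏ (1 - θ ^ i) = p`.
Since `|θ ^ i| = 1`, every `ϑ_i` has real part `-1/2`. Hence no `ϑ_i` is an integer, and an
integer difference `ϑ_i - ϑ_j` has real part `0`, so it vanishes, forcing `θ ^ i = θ ^ j`.
-/

open Polynomial Finset

theorem IsPrimitiveRoot.pow_sub_pow_eq_prod_sub_pow_mul {R : Type*} [CommRing R] [IsDomain R]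
    {ζ : R} {n : ℕ} (hζ : IsPrimitiveRoot ζ n) (hn : 0 < n) (x y : R) :
    x ^ n - y ^ n = ∏ i ∈ range n, (x - ζ ^ i * y) := by
  simpa [eval_prod] using congrArg (eval x) (X_pow_sub_C_eq_prod hζ hn (rfl : y ^ n = y ^ n))

theorem Complex.re_one_div_sub_one_of_norm_eq_one {z : ℂ} (hz : ‖z‖ = 1) (hz1 : z ≠ 1) :
    (1 / (z - 1)).re = -(1 / 2) := by
  have hnormSq : normSq (z - 1) = -2 * (z - 1).re := by
    have : normSq z = 1 := by rw [normSq_eq_norm_sq, hz, one_pow]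
    rw [normSq_apply] at this
    simp only [normSq_apply, sub_re, sub_im, one_re, one_im]
    linear_combination this
  have hre : (z - 1).re ≠ 0 := by
    intro h
    rw [h, mul_zero, normSq_eq_zero, sub_eq_zero] at hnormSq
    exact hz1 hnormSq
  rw [one_div, inv_re, hnormSq]
  field_simp

theorem IsPrimitiveRoot.re_one_div_pow_sub_one {ζ : ℂ} {n i : ℕ} (hζ : IsPrimitiveRoot ζ n)
    (hi0 : 0 < i) (hin : i < n) : (1 / (ζ ^ i - 1)).re = -(1 / 2) :=
  Complex.re_one_div_sub_one_of_norm_eq_one (by rw [norm_pow, hζ.norm'_eq_one (by omega), one_pow])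
    (hζ.pow_ne_one_of_pos_of_lt hi0.ne' hin)

theorem X_add_one_sub_C_mul_X_eq {K : Type*} [Field K] {a : K} (ha : a ≠ 1) :
    X + 1 - C a * X = C (1 - a) * (X - C (1 / (a - 1))) := by
  have : a - 1 ≠ 0 := sub_ne_zero.mpr ha
  rw [mul_sub, ← C_mul, show (1 - a) * (1 / (a - 1)) = -1 by field_simp; ring]
  simp only [C_sub, C_1, C_neg]
  ring

theorem IsPrimitiveRoot.X_add_one_pow_sub_X_pow_eq {K : Type*} [Field K] {ζ : K} {n : ℕ}
    (hζ : IsPrimitiveRoot ζ n) :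
    (X + 1 : K[X]) ^ n - X ^ n = C (n : K) * ∏ i ∈ Icc 1 (n - 1), (X - C (1 / (ζ ^ i - 1))) := by
  obtain _ | m := n
  · simp
  have hC : IsPrimitiveRoot (C ζ) (m + 1) := hζ.map_of_injective C_injective
  have hIcc : Icc 1 (m + 1 - 1) = (range m).map (addRightEmbedding 1) := by
    rw [range_eq_Ico, map_add_right_Ico, zero_add, Nat.add_sub_cancel, Ico_add_one_right_eq_Icc]
  have hfactor : ∀ k ∈ range m, X + 1 - C ζ ^ (k + 1) * X
      = C (1 - ζ ^ (k + 1)) * (X - C (1 / (ζ ^ (k + 1) - 1))) := fun k hk => by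
    rw [← C_pow]
    exact X_add_one_sub_C_mul_X_eq (hζ.pow_ne_one_of_pos_of_lt k.succ_ne_zero (by simpa using hk))
  rw [hC.pow_sub_pow_eq_prod_sub_pow_mul m.succ_pos, prod_range_succ', pow_zero, one_mul,
    add_sub_cancel_left, mul_one, hIcc, prod_map, prod_congr rfl hfactor, prod_mul_distrib,
    ← map_prod, hζ.prod_one_sub_pow_eq_order, Nat.cast_succ]
  rfl

theorem primitive_root_factorization_general (p : ℕ) (θ : ℂ)
    (hθ : IsPrimitiveRoot θ p) :
    ((Polynomial.X + 1 : Polynomial ℂ) ^ p - Polynomial.X ^ p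
        = Polynomial.C (p : ℂ) *
          ∏ i ∈ Finset.Icc 1 (p - 1), (Polynomial.X - Polynomial.C (1 / (θ ^ i - 1))))
    ∧ (∀ i ∈ Finset.Icc 1 (p - 1), ∀ j ∈ Finset.Icc 1 (p - 1), i ≠ j →
        ∀ n : ℤ, 1 / (θ ^ i - 1) - 1 / (θ ^ j - 1) ≠ (n : ℂ))
    ∧ (∀ i ∈ Finset.Icc 1 (p - 1), ∀ n : ℤ, 1 / (θ ^ i - 1) ≠ (n : ℂ)) := by
  have hre : ∀ i ∈ Icc 1 (p - 1), (1 / (θ ^ i - 1)).re = -(1 / 2) := fun i hi => by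
    rw [mem_Icc] at hi
    exact hθ.re_one_div_pow_sub_one (by omega) (by omega)
  refine ⟨hθ.X_add_one_pow_sub_X_pow_eq, ?_, ?_⟩
  · intro i hi j hj hij n h
    have hn : (n : ℂ) = 0 := by
      have := congrArg Complex.re h
      rw [Complex.sub_re, hre i hi, hre j hj, Complex.intCast_re] at this
      exact_mod_cast (by linarith : (n : ℝ) = 0)
    rw [hn, sub_eq_zero, one_div, one_div, inv_inj, sub_left_inj] at h
    rw [mem_Icc] at hi hj
    exact hij (hθ.pow_inj (by omega) (by omega) h)
  · intro i hi n h
    have := congrArg Complex.re h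
    rw [hre i hi, Complex.intCast_re] at this
    have : 2 * n = -1 := by exact_mod_cast (by linarith : 2 * (n : ℝ) = -1)
    omega

/-- for a primitive p-th root of unity θ and ϑ_i = 1/(θ^i − 1),
(x+1)^p − x^p = p·∏_{i=1}^{p−1}(x − ϑ_i); moreover ϑ_i − ϑ_j is never an integer
for i ≠ j, and ϑ_i is never an integer. -/
theorem primitive_root_factorization (p : ℕ) (hp : 2 ≤ p) (θ : ℂ)
    (hθ : IsPrimitiveRoot θ p) :
    ((Polynomial.X + 1 : Polynomial ℂ) ^ p - Polynomial.X ^ p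
        = Polynomial.C (p : ℂ) *
          ∏ i ∈ Finset.Icc 1 (p - 1), (Polynomial.X - Polynomial.C (1 / (θ ^ i - 1))))
    ∧ (∀ i ∈ Finset.Icc 1 (p - 1), ∀ j ∈ Finset.Icc 1 (p - 1), i ≠ j →
        ∀ n : ℤ, 1 / (θ ^ i - 1) - 1 / (θ ^ j - 1) ≠ (n : ℂ))
    ∧ (∀ i ∈ Finset.Icc 1 (p - 1), ∀ n : ℤ, 1 / (θ ^ i - 1) ≠ (n : ℂ)) :=
  primitive_root_factorization_general p θ hθ
end
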